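/- arXiv:math/0410212 — 3 statements merged into one kernel-verified Lean document; each statement's English description precedes it below -/
import Mathlib

section
/- Fix k ≥ 2 and s, r, ρ > 0. There exists a constant C > 0 such that for every injective holomorphic map F : B_ρ → ℂ^k (defined and Differentiable over ℂ on the open ball B_ρ of radius ρ centered at 0) with F(0) = 0 and s‖z‖ ≤ ‖F(z)‖ ≤ r‖z‖ for all z ∈ B_ρ, the derivative A_F = dF(0) (the Fréchet derivative of F at 0) is an invertible linear map of ℂ^k, and ‖A_F⁻¹(F(z)) − z‖ ≤ C‖z‖² for all z ∈ B_ρ. -/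
/-!
The lower bound `s‖z‖ ≤ ‖F z‖` passes to `dF(0)` along rays, so `dF(0)` is injective, hence
invertible with `‖dF(0)⁻¹‖ ≤ 1/s`. The remainder `F - dF(0)` is holomorphic on `B_ρ`, bounded
there by `2rρ` (the Schwarz lemma gives `‖dF(0)‖ ≤ r`) and vanishes to second order at `0`,
so the second-order Schwarz lemma bounds it by `(2r/ρ)‖z‖²`.
-/

open Metric Set Filter Topology

section LowerBound

variable {E F : Type*} [NormedAddCommGroup E] [NormedSpace ℝ E]
  [NormedAddCommGroup F] [NormedSpace ℝ F] {f : E → F} {L : E →L[ℝ] F} {s : ℝ}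

theorem HasFDerivAt.tendsto_inv_smul_apply_smul (hf : HasFDerivAt f L 0) (hf0 : f 0 = 0)
    (v : E) : Tendsto (fun t : ℝ => t⁻¹ • f (t • v)) (𝓝[>] 0) (𝓝 (L v)) := by
  have hline : HasDerivAt (fun t : ℝ => f (t • v)) (L v) 0 := by
    have := (hasDerivAt_id (0 : ℝ)).smul_const v
    simp only [id, one_smul] at this
    exact (by simpa using hf : HasFDerivAt f L ((0 : ℝ) • v)).comp_hasDerivAt 0 this
  have := (hasDerivAt_iff_tendsto_slope.mp hline).mono_left (nhdsGT_le_nhdsNE 0)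
  convert this using 1
  ext t
  simp [slope_def_module, hf0]

theorem HasFDerivAt.mul_norm_le_norm_apply (hf : HasFDerivAt f L 0) (hf0 : f 0 = 0)
    (hs : ∀ᶠ z in 𝓝 0, s * ‖z‖ ≤ ‖f z‖) (v : E) : s * ‖v‖ ≤ ‖L v‖ := by
  have hsmall : ∀ᶠ t : ℝ in 𝓝[>] 0, s * ‖t • v‖ ≤ ‖f (t • v)‖ := by
    have : Tendsto (fun t : ℝ => t • v) (𝓝 0) (𝓝 0) := by
      simpa using (tendsto_id (x := 𝓝 (0 : ℝ))).smul_const v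
    exact (this.eventually hs).filter_mono nhdsWithin_le_nhds
  refine ge_of_tendsto (hf.tendsto_inv_smul_apply_smul hf0 v).norm ?_
  filter_upwards [hsmall, self_mem_nhdsWithin] with t ht (htpos : 0 < t)
  rw [norm_smul, Real.norm_of_nonneg htpos.le] at ht
  rw [norm_smul, norm_inv, Real.norm_of_nonneg htpos.le, le_inv_mul_iff₀ htpos]
  linarith

end LowerBound

theorem ContinuousLinearMap.exists_equiv_of_mul_norm_le_norm_apply {𝕜 E : Type*}
    [NontriviallyNormedField 𝕜] [CompleteSpace 𝕜] [NormedAddCommGroup E] [NormedSpace 𝕜 E]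
    [FiniteDimensional 𝕜 E] (L : E →L[𝕜] E) {s : ℝ} (hs : 0 < s)
    (hL : ∀ v, s * ‖v‖ ≤ ‖L v‖) :
    ∃ A : E ≃L[𝕜] E, (A : E →L[𝕜] E) = L ∧ ∀ w, ‖A.symm w‖ ≤ s⁻¹ * ‖w‖ := by
  have hinj : Function.Injective L := by
    refine (injective_iff_map_eq_zero L).mpr fun v hv => norm_le_zero_iff.mp ?_
    have := hL v
    rw [hv, norm_zero] at this
    nlinarith [norm_nonneg v]
  let A := (LinearEquiv.ofInjectiveEndo (L : E →ₗ[𝕜] E) hinj).toContinuousLinearEquiv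
  refine ⟨A, rfl, fun w => ?_⟩
  rw [le_inv_mul_iff₀ hs]
  have hw : L (A.symm w) = w := A.apply_symm_apply w
  simpa [hw] using hL (A.symm w)

section Remainder

variable {E F : Type*} [NormedAddCommGroup E] [NormedSpace ℂ E]
  [NormedAddCommGroup F] [NormedSpace ℂ F] {f : E → F} {r ρ : ℝ}

theorem norm_sub_fderiv_le_of_norm_le (hr : 0 ≤ r) (hf : DifferentiableOn ℂ f (ball 0 ρ))
    (hbound : ∀ z ∈ ball 0 ρ, ‖f z‖ ≤ r * ‖z‖) {z : E} (hz : z ∈ ball 0 ρ) :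
    ‖f z - fderiv ℂ f 0 z‖ ≤ 2 * r / ρ * ‖z‖ ^ 2 := by
  have hρ : 0 < ρ := nonempty_ball.mp ⟨z, hz⟩
  have hf0 : f 0 = 0 := by simpa using hbound 0 (mem_ball_self hρ)
  have hbound' : ∀ w ∈ ball 0 ρ, ‖f w‖ ≤ r * ρ := fun w hw =>
    (hbound w hw).trans (by gcongr; exact (mem_ball_zero_iff.mp hw).le)
  set L := fderiv ℂ f 0
  have hL : HasFDerivAt f L 0 := (hf.differentiableAt (ball_mem_nhds 0 hρ)).hasFDerivAt
  have hLr : ‖L‖ ≤ r := by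
    have hmaps : MapsTo f (ball 0 ρ) (closedBall (f 0) (r * ρ)) := fun w hw => by
      simpa [hf0] using hbound' w hw
    simpa [hρ.ne'] using Complex.norm_fderiv_le_div_of_mapsTo_ball hf hmaps hρ
  set g := fun w => f w - L w
  have hg : DifferentiableOn ℂ g (ball 0 ρ) := hf.sub L.differentiable.differentiableOn
  have hg0 : g 0 = 0 := by simp [g, hf0]
  have hmaps : MapsTo g (ball 0 ρ) (closedBall (g 0) (2 * r * ρ)) := fun w hw => by
    have hLw : ‖L w‖ ≤ r * ρ :=
      (L.le_opNorm w).trans (by gcongr; exact (mem_ball_zero_iff.mp hw).le)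
    rw [hg0, mem_closedBall_zero_iff]
    linarith [norm_sub_le (f w) (L w), hbound' w hw]
  have ho : (g · - g 0) =o[𝓝 0] (fun w => ‖w - 0‖ ^ 1) := by
    simpa [g, hg0, hf0] using hL.isLittleO.norm_right
  calc ‖f z - L z‖ = dist (g z) (g 0) := by simp [g, hg0, dist_zero_right]
    _ ≤ 2 * r * ρ * (dist z 0 / ρ) ^ (1 + 1) :=
      Complex.dist_le_mul_div_pow_of_mapsTo_ball_of_isLittleO hg hmaps ho hz
    _ = 2 * r / ρ * ‖z‖ ^ 2 := by
      rw [dist_zero_right, one_add_one_eq_two, div_pow]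
      field_simp

end Remainder

theorem quadratic_estimate_for_bounded_family_general (k : ℕ) (s r ρ : ℝ)
    (hs : 0 < s) (hr : 0 < r) (hρ : 0 < ρ) :
    ∃ C > (0 : ℝ), ∀ F : EuclideanSpace ℂ (Fin k) → EuclideanSpace ℂ (Fin k),
      DifferentiableOn ℂ F (Metric.ball 0 ρ) →
      Set.InjOn F (Metric.ball 0 ρ) →
      F 0 = 0 →
      (∀ z ∈ Metric.ball (0 : EuclideanSpace ℂ (Fin k)) ρ,
        s * ‖z‖ ≤ ‖F z‖ ∧ ‖F z‖ ≤ r * ‖z‖) →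
      ∃ A : EuclideanSpace ℂ (Fin k) ≃L[ℂ] EuclideanSpace ℂ (Fin k),
        (A : EuclideanSpace ℂ (Fin k) →L[ℂ] EuclideanSpace ℂ (Fin k)) = fderiv ℂ F 0 ∧
        ∀ z ∈ Metric.ball (0 : EuclideanSpace ℂ (Fin k)) ρ,
          ‖A.symm (F z) - z‖ ≤ C * ‖z‖ ^ 2 := by
  refine ⟨2 * r / (s * ρ), by positivity, fun F hF _ hF0 hbound => ?_⟩
  have hball : ball (0 : EuclideanSpace ℂ (Fin k)) ρ ∈ 𝓝 0 := ball_mem_nhds 0 hρ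
  have hL := (hF.differentiableAt hball).hasFDerivAt.restrictScalars ℝ
  obtain ⟨A, hAL, hA⟩ := (fderiv ℂ F 0).exists_equiv_of_mul_norm_le_norm_apply hs
    (hL.mul_norm_le_norm_apply hF0 (eventually_of_mem hball fun z hz => (hbound z hz).1))
  refine ⟨A, hAL, fun z hz => ?_⟩
  calc ‖A.symm (F z) - z‖ = ‖A.symm (F z - fderiv ℂ F 0 z)‖ := by
        rw [map_sub, ← hAL, ContinuousLinearEquiv.coe_coe, A.symm_apply_apply]
    _ ≤ s⁻¹ * (2 * r / ρ * ‖z‖ ^ 2) := (hA _).trans <| by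
        gcongr
        exact norm_sub_fderiv_le_of_norm_le hr.le hF (fun w hw => (hbound w hw).2) hz
    _ = 2 * r / (s * ρ) * ‖z‖ ^ 2 := by field_simp

theorem quadratic_estimate_for_bounded_family (k : ℕ) (hk : 2 ≤ k) (s r ρ : ℝ)
    (hs : 0 < s) (hr : 0 < r) (hρ : 0 < ρ) :
    ∃ C > (0 : ℝ), ∀ F : EuclideanSpace ℂ (Fin k) → EuclideanSpace ℂ (Fin k),
      DifferentiableOn ℂ F (Metric.ball 0 ρ) →
      Set.InjOn F (Metric.ball 0 ρ) →
      F 0 = 0 →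
      (∀ z ∈ Metric.ball (0 : EuclideanSpace ℂ (Fin k)) ρ,
        s * ‖z‖ ≤ ‖F z‖ ∧ ‖F z‖ ≤ r * ‖z‖) →
      ∃ A : EuclideanSpace ℂ (Fin k) ≃L[ℂ] EuclideanSpace ℂ (Fin k),
        (A : EuclideanSpace ℂ (Fin k) →L[ℂ] EuclideanSpace ℂ (Fin k)) = fderiv ℂ F 0 ∧
        ∀ z ∈ Metric.ball (0 : EuclideanSpace ℂ (Fin k)) ρ,
          ‖A.symm (F z) - z‖ ≤ C * ‖z‖ ^ 2 :=
  quadratic_estimate_for_bounded_family_general k s r ρ hs hr hρ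
end

section
/- Let k ≥ 2, let 0 < r < 1, let δ > 0, let p ∈ ℂ^k, and let (F_j)_{j ≥ 1} be a sequence of holomorphic automorphisms of ℂ^k with F_j(p) = p and ‖F_j(z) − p‖ ≤ r‖z − p‖ for all z in the open ball B_δ(p) and all j. Then the basin of attraction Ω^p_{(F_j)} equals the union ⋃_{j ≥ 0} F(j)⁻¹(B_δ(p)) of the preimages of B_δ(p) under the composed maps F(j) = F_j ∘ ⋯ ∘ F_1, and consequently Ω^p_{(F_j)} is an open connected subset of ℂ^k. -/
open Metric Set Filter

noncomputable section

/-- A holomorphic automorphism of `ℂ^k`: a holomorphic bijection with holomorphic inverse. -/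
def IsAutomorphism {k : ℕ} (F : EuclideanSpace ℂ (Fin k) → EuclideanSpace ℂ (Fin k)) : Prop :=
  Differentiable ℂ F ∧ ∃ G : EuclideanSpace ℂ (Fin k) → EuclideanSpace ℂ (Fin k),
    Differentiable ℂ G ∧ Function.LeftInverse G F ∧ Function.RightInverse G F

/-- `seqComp F j = F j ∘ ⋯ ∘ F 1`, with `seqComp F 0 = id`. -/
def seqComp {α : Type*} (F : ℕ → α → α) : ℕ → α → α
  | 0 => id
  | n + 1 => F (n + 1) ∘ seqComp F n

theorem basin_is_union_of_preimages_and_open_connected (k : ℕ) (hk : 2 ≤ k) (r δ : ℝ)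
    (hr0 : 0 < r) (hr1 : r < 1) (hδ : 0 < δ)
    (p : EuclideanSpace ℂ (Fin k))
    (F : ℕ → EuclideanSpace ℂ (Fin k) → EuclideanSpace ℂ (Fin k))
    (hF : ∀ j, 1 ≤ j → IsAutomorphism (F j) ∧ F j p = p ∧
      ∀ z ∈ Metric.ball p δ, ‖F j z - p‖ ≤ r * ‖z - p‖) :
    {z | Tendsto (fun j => seqComp F j z) atTop (nhds p)} =
      (⋃ j : ℕ, seqComp F j ⁻¹' Metric.ball p δ) ∧
    IsOpen {z | Tendsto (fun j => seqComp F j z) atTop (nhds p)} ∧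
    IsConnected {z | Tendsto (fun j => seqComp F j z) atTop (nhds p)} := by
  have hfix : ∀ n, seqComp F n p = p := by
    intro n; induction n with
    | zero => rfl
    | succ n ih =>
      show F (n + 1) (seqComp F n p) = p
      rw [ih, (hF (n + 1) (by omega)).2.1]
  have hcont : ∀ n, Continuous (seqComp F n) := by
    intro n; induction n with
    | zero => exact continuous_id
    | succ n ih => exact ((hF (n + 1) (by omega)).1.1.continuous).comp ih
  have key : ∀ z j, seqComp F j z ∈ ball p δ →
      ∀ n, ‖seqComp F (j + n) z - p‖ ≤ r ^ n * ‖seqComp F j z - p‖ := by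
    intro z j hz n
    induction n with
    | zero => simp
    | succ n ih =>
      have hmem : seqComp F (j + n) z ∈ ball p δ := by
        rw [mem_ball, dist_eq_norm]
        calc ‖seqComp F (j + n) z - p‖ ≤ r ^ n * ‖seqComp F j z - p‖ := ih
          _ ≤ 1 * ‖seqComp F j z - p‖ := by
              gcongr
              exact pow_le_one₀ hr0.le hr1.le
          _ = ‖seqComp F j z - p‖ := one_mul _
          _ < δ := by rw [← dist_eq_norm]; exact mem_ball.mp hz
      have hstep : seqComp F (j + (n + 1)) z = F (j + n + 1) (seqComp F (j + n) z) := rfl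
      rw [hstep, pow_succ]
      calc ‖F (j + n + 1) (seqComp F (j + n) z) - p‖
          ≤ r * ‖seqComp F (j + n) z - p‖ := (hF (j + n + 1) (by omega)).2.2 _ hmem
        _ ≤ r * (r ^ n * ‖seqComp F j z - p‖) := by gcongr
        _ = r ^ n * r * ‖seqComp F j z - p‖ := by ring
  have tend : ∀ z j, seqComp F j z ∈ ball p δ →
      Tendsto (fun m => seqComp F m z) atTop (nhds p) := by
    intro z j hz
    have hb : Tendsto (fun n : ℕ => r ^ n * ‖seqComp F j z - p‖) atTop (nhds 0) := by
      simpa using (tendsto_pow_atTop_nhds_zero_of_lt_one hr0.le hr1).mul_const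
        ‖seqComp F j z - p‖
    have h0 : Tendsto (fun n => ‖seqComp F (j + n) z - p‖) atTop (nhds 0) :=
      squeeze_zero (fun n => norm_nonneg _) (fun n => key z j hz n) hb
    have h1 : Tendsto (fun n => seqComp F (j + n) z) atTop (nhds p) :=
      tendsto_iff_norm_sub_tendsto_zero.mpr h0
    have h2 : Tendsto (fun n => seqComp F (n + j) z) atTop (nhds p) := by
      simpa [Nat.add_comm] using h1
    exact (tendsto_add_atTop_iff_nat j).mp h2
  have hEq : {z | Tendsto (fun j => seqComp F j z) atTop (nhds p)} =
      ⋃ j : ℕ, seqComp F j ⁻¹' ball p δ := by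
    ext z
    constructor
    · intro hz
      have : ∀ᶠ n in atTop, seqComp F n z ∈ ball p δ := hz (ball_mem_nhds p hδ)
      obtain ⟨j, hj⟩ := this.exists
      exact mem_iUnion.mpr ⟨j, hj⟩
    · intro hz
      obtain ⟨j, hj⟩ := mem_iUnion.mp hz
      exact tend z j hj
  have hinv : ∀ n, ∃ g, Continuous g ∧ Function.LeftInverse g (seqComp F n) ∧
      Function.RightInverse g (seqComp F n) := by
    intro n; induction n with
    | zero => exact ⟨id, continuous_id, fun x => rfl, fun x => rfl⟩
    | succ n ih =>
      obtain ⟨g, hgc, hgl, hgr⟩ := ih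
      obtain ⟨G, hGd, hGl, hGr⟩ := (hF (n + 1) (by omega)).1.2
      refine ⟨g ∘ G, hgc.comp hGd.continuous, ?_, ?_⟩
      · intro x
        show g (G (F (n + 1) (seqComp F n x))) = x
        rw [hGl, hgl]
      · intro x
        show F (n + 1) (seqComp F n (g (G x))) = x
        rw [hgr, hGr]
  have hconnBall : IsConnected (ball p δ) :=
    (convex_ball p δ).isConnected (nonempty_ball.mpr hδ)
  have hconnPre : ∀ n, IsConnected (seqComp F n ⁻¹' ball p δ) := by
    intro n
    obtain ⟨g, hgc, hgl, hgr⟩ := hinv n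
    have himg : seqComp F n ⁻¹' ball p δ = g '' ball p δ := by
      ext w
      constructor
      · intro hw; exact ⟨seqComp F n w, hw, hgl w⟩
      · rintro ⟨a, ha, rfl⟩
        simpa [Set.mem_preimage, hgr a] using ha
    rw [himg]
    exact hconnBall.image g hgc.continuousOn
  refine ⟨hEq, ?_, ?_⟩
  · rw [hEq]
    exact isOpen_iUnion fun j => (hcont j).isOpen_preimage _ isOpen_ball
  · rw [hEq]
    refine ⟨⟨p, mem_iUnion.mpr ⟨0, show (p : EuclideanSpace ℂ (Fin k)) ∈ ball p δ from mem_ball_self hδ⟩⟩, ?_⟩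
    rw [← Set.sUnion_range]
    apply isPreconnected_sUnion p
    · rintro s ⟨j, rfl⟩
      exact mem_preimage.mpr (by rw [hfix]; exact mem_ball_self hδ)
    · rintro s ⟨j, rfl⟩
      exact (hconnPre j).isPreconnected
end
end

section
/- Let k ≥ 2 and ρ > 0. Then there exist δ > 0, ρ' with 0 < ρ' < ρ, and real numbers 0 < s < r < 1 with r² < s, such that every injective holomorphic map F : B_ρ → ℂ^k (Differentiable over ℂ on the open ball B_ρ) with F(0) = 0 and ‖F(z) − z/2‖ < δ for all z ∈ B_ρ satisfies s‖z‖ ≤ ‖F(z)‖ ≤ r‖z‖ for all z ∈ B_{ρ'}. -/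
/-!
`F z - z/2` is holomorphic on `B_ρ`, vanishes at `0` and is bounded by `δ`, so the Schwarz lemma
gives `‖F z - z/2‖ ≤ (δ/ρ)‖z‖`. With `δ = ρ/10` this pins `‖F z‖` between `(2/5)‖z‖` and
`(3/5)‖z‖`, and `(3/5)² < 2/5`.
-/

open Metric Set

theorem Complex.norm_sub_le_div_mul_norm_of_forall_norm_sub_le {E F : Type*}
    [NormedAddCommGroup E] [NormedSpace ℂ E] [NormedAddCommGroup F] [NormedSpace ℂ F]
    {f g : E → F} {R δ : ℝ} {z : E}
    (hf : DifferentiableOn ℂ f (ball 0 R)) (hg : DifferentiableOn ℂ g (ball 0 R))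
    (h₀ : f 0 = g 0) (hδ : ∀ w ∈ ball (0 : E) R, ‖f w - g w‖ ≤ δ) (hz : z ∈ ball 0 R) :
    ‖f z - g z‖ ≤ δ / R * ‖z‖ := by
  have h_maps : MapsTo (f - g) (ball 0 R) (closedBall ((f - g) 0) δ) := by
    intro w hw
    simpa [h₀] using hδ w hw
  simpa [h₀] using Complex.dist_le_div_mul_dist_of_mapsTo_ball (hf.sub hg) h_maps hz

theorem near_half_contraction_satisfies_bounds_general (k : ℕ) (ρ : ℝ) (hρ : 0 < ρ) :
    ∃ δ > (0 : ℝ), ∃ ρ' : ℝ, 0 < ρ' ∧ ρ' < ρ ∧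
      ∃ s r : ℝ, 0 < s ∧ s < r ∧ r < 1 ∧ r ^ 2 < s ∧
        ∀ F : EuclideanSpace ℂ (Fin k) → EuclideanSpace ℂ (Fin k),
          DifferentiableOn ℂ F (Metric.ball 0 ρ) →
          Set.InjOn F (Metric.ball 0 ρ) →
          F 0 = 0 →
          (∀ z ∈ Metric.ball (0 : EuclideanSpace ℂ (Fin k)) ρ,
            ‖F z - (2⁻¹ : ℂ) • z‖ < δ) →
          ∀ z ∈ Metric.ball (0 : EuclideanSpace ℂ (Fin k)) ρ',
            s * ‖z‖ ≤ ‖F z‖ ∧ ‖F z‖ ≤ r * ‖z‖ := by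
  refine ⟨ρ / 10, by positivity, ρ / 2, by positivity, by linarith, 2 / 5, 3 / 5,
    by norm_num, by norm_num, by norm_num, by norm_num, ?_⟩
  intro F hF _ hF₀ hδ z hz
  have hzρ : z ∈ ball 0 ρ := ball_subset_ball (by linarith) hz
  have hclose : ‖F z - (2⁻¹ : ℂ) • z‖ ≤ 1 / 10 * ‖z‖ := by
    have := Complex.norm_sub_le_div_mul_norm_of_forall_norm_sub_le hF
      (differentiable_id.const_smul (2⁻¹ : ℂ)).differentiableOn (by simp [hF₀])
      (fun w hw ↦ (hδ w hw).le) hzρ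
    rw [div_div_cancel_left' hρ.ne'] at this
    simpa [one_div] using this
  have hhalf : ‖(2⁻¹ : ℂ) • z‖ = ‖z‖ / 2 := by simp [norm_smul, div_eq_inv_mul]
  have hdiff := abs_le.mp ((abs_norm_sub_norm_le (F z) ((2⁻¹ : ℂ) • z)).trans hclose)
  constructor <;> linarith [hdiff.1, hdiff.2]

theorem near_half_contraction_satisfies_bounds (k : ℕ) (hk : 2 ≤ k) (ρ : ℝ) (hρ : 0 < ρ) :
    ∃ δ > (0 : ℝ), ∃ ρ' : ℝ, 0 < ρ' ∧ ρ' < ρ ∧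
      ∃ s r : ℝ, 0 < s ∧ s < r ∧ r < 1 ∧ r ^ 2 < s ∧
        ∀ F : EuclideanSpace ℂ (Fin k) → EuclideanSpace ℂ (Fin k),
          DifferentiableOn ℂ F (Metric.ball 0 ρ) →
          Set.InjOn F (Metric.ball 0 ρ) →
          F 0 = 0 →
          (∀ z ∈ Metric.ball (0 : EuclideanSpace ℂ (Fin k)) ρ,
            ‖F z - (2⁻¹ : ℂ) • z‖ < δ) →
          ∀ z ∈ Metric.ball (0 : EuclideanSpace ℂ (Fin k)) ρ',
            s * ‖z‖ ≤ ‖F z‖ ∧ ‖F z‖ ≤ r * ‖z‖ :=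
  near_half_contraction_satisfies_bounds_general k ρ hρ
end
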